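/- Let C be a 2-category and W a class of 1-morphisms satisfying (BF1)–(BF5). With f¹ = (A¹, w¹, f¹), f² = (A², w², f²) : A → B and fixed choice (E, p, q, ς) for the cospan (w¹, w²) as before, two triples satisfy (A³, t, φ) ∼ (A'³, t', φ') if and only if the quintuples (A³, p ∘ t, q ∘ t, ς ▷ t, φ) and (A'³, p ∘ t', q ∘ t', ς ▷ t', φ') are equivalent in Pronk's sense. Consequently, the map N sending the ∼-class [A³, t, φ] to the Pronk class [A³, p ∘ t, q ∘ t, ς ▷ t, φ] is a well-defined bijection from ∼-classes of triples to the set of 2-morphisms from f¹ to f² in the bicategory of fractions. -/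

import Mathlib

open CategoryTheory CategoryTheory.Bicategory

universe w v u


/-- Pronk's axioms (BF1)–(BF5) for a right bicalculus of fractions on a class `W`
of 1-morphisms of a bicategory. -/
structure PronkBF {B : Type u} [Bicategory.{w, v} B]
    (W : ∀ ⦃X Y : B⦄, (X ⟶ Y) → Prop) : Prop where
  bf1 : ∀ X : B, W (𝟙 X)
  bf2 : ∀ {X Y Z : B} (f : X ⟶ Y) (g : Y ⟶ Z), W f → W g → W (f ≫ g)
  bf3 : ∀ {X Y Z : B} (wm : X ⟶ Y) (f : Z ⟶ Y), W wm →
      ∃ (D : B) (w' : D ⟶ Z) (f' : D ⟶ X), W w' ∧ Nonempty (w' ≫ f ≅ f' ≫ wm)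
  bf4a : ∀ {X Y Z : B} (wm : Y ⟶ X) (f₁ f₂ : Z ⟶ Y) (α : f₁ ≫ wm ⟶ f₂ ≫ wm), W wm →
      ∃ (D : B) (vm : D ⟶ Z) (β : vm ≫ f₁ ⟶ vm ≫ f₂), W vm ∧
        vm ◁ α = (α_ vm f₁ wm).inv ≫ β ▷ wm ≫ (α_ vm f₂ wm).hom
  bf4b : ∀ {X Y Z : B} (wm : Y ⟶ X) (f₁ f₂ : Z ⟶ Y) (α : f₁ ≫ wm ⟶ f₂ ≫ wm), W wm → IsIso α →
      ∃ (D : B) (vm : D ⟶ Z) (β : vm ≫ f₁ ⟶ vm ≫ f₂), W vm ∧ IsIso β ∧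
        vm ◁ α = (α_ vm f₁ wm).inv ≫ β ▷ wm ≫ (α_ vm f₂ wm).hom
  bf4c : ∀ {X Y Z : B} (wm : Y ⟶ X) (f₁ f₂ : Z ⟶ Y) (α : f₁ ≫ wm ⟶ f₂ ≫ wm)
      {D D' : B} (vm : D ⟶ Z) (β : vm ≫ f₁ ⟶ vm ≫ f₂)
      (vm' : D' ⟶ Z) (β' : vm' ≫ f₁ ⟶ vm' ≫ f₂),
      W wm → W vm → W vm' →
      (vm ◁ α = (α_ vm f₁ wm).inv ≫ β ▷ wm ≫ (α_ vm f₂ wm).hom) →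
      (vm' ◁ α = (α_ vm' f₁ wm).inv ≫ β' ▷ wm ≫ (α_ vm' f₂ wm).hom) →
      ∃ (E : B) (um : E ⟶ D) (um' : E ⟶ D') (ζ : um ≫ vm ≅ um' ≫ vm'),
        W (um ≫ vm) ∧
        ζ.hom ▷ f₁ ≫ (α_ um' vm' f₁).hom ≫ um' ◁ β' ≫ (α_ um' vm' f₂).inv
          = (α_ um vm f₁).hom ≫ um ◁ β ≫ (α_ um vm f₂).inv ≫ ζ.hom ▷ f₂
  bf5 : ∀ {X Y : B} (vm wm : X ⟶ Y), W wm → Nonempty (vm ≅ wm) → W vm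
variable {B : Type u} [Bicategory.{w, v} B]

/-- The data of a representative of a 2-morphism in Pronk's bicategory of fractions:
a quintuple `(obj, v₁, v₂, α, β)`. -/
structure PronkSq {A Bb A₁ A₂ : B}
    (w₁ : A₁ ⟶ A) (f₁ : A₁ ⟶ Bb) (w₂ : A₂ ⟶ A) (f₂ : A₂ ⟶ Bb) where
  obj : B
  v₁ : obj ⟶ A₁
  v₂ : obj ⟶ A₂
  α : v₁ ≫ w₁ ⟶ v₂ ≫ w₂
  β : v₁ ≫ f₁ ⟶ v₂ ≫ f₂

/-- Pronk's relation on quintuples representing 2-morphisms of the bicategory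
of fractions. -/
def PronkRel (W : ∀ ⦃X Y : B⦄, (X ⟶ Y) → Prop) {A Bb A₁ A₂ : B}
    (w₁ : A₁ ⟶ A) (f₁ : A₁ ⟶ Bb) (w₂ : A₂ ⟶ A) (f₂ : A₂ ⟶ Bb)
    (Q Q' : PronkSq w₁ f₁ w₂ f₂) : Prop :=
  ∃ (A₄ : B) (z : A₄ ⟶ Q.obj) (z' : A₄ ⟶ Q'.obj)
    (σ₁ : z' ≫ Q'.v₁ ≅ z ≫ Q.v₁) (σ₂ : z ≫ Q.v₂ ≅ z' ≫ Q'.v₂),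
    W ((z ≫ Q.v₁) ≫ w₁) ∧
    (σ₁.hom ▷ w₁ ≫ (α_ z Q.v₁ w₁).hom ≫ z ◁ Q.α ≫ (α_ z Q.v₂ w₂).inv ≫ σ₂.hom ▷ w₂
       = (α_ z' Q'.v₁ w₁).hom ≫ z' ◁ Q'.α ≫ (α_ z' Q'.v₂ w₂).inv) ∧
    (σ₁.hom ▷ f₁ ≫ (α_ z Q.v₁ f₁).hom ≫ z ◁ Q.β ≫ (α_ z Q.v₂ f₂).inv ≫ σ₂.hom ▷ f₂
       = (α_ z' Q'.v₁ f₁).hom ≫ z' ◁ Q'.β ≫ (α_ z' Q'.v₂ f₂).inv)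
variable {B : Type u} [Bicategory.{w, v} B]

/-- An "almost canonical" representative of a 2-morphism in a bicategory of fractions
(relative to a fixed choice `(E, p, q, ς)` completing the cospan `(w₁, w₂)`): a triple
`(obj, t, φ)` with `t ∈ W`. -/
structure AlmostTriple (W : ∀ ⦃X Y : B⦄, (X ⟶ Y) → Prop)
    {Bb A₁ A₂ E : B} (f₁ : A₁ ⟶ Bb) (f₂ : A₂ ⟶ Bb) (p : E ⟶ A₁) (q : E ⟶ A₂) where
  obj : B
  t : obj ⟶ E
  ht : W t
  φ : (t ≫ p) ≫ f₁ ⟶ (t ≫ q) ≫ f₂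

/-- The relation `∼` on almost canonical triples. -/
def TripleRel (W : ∀ ⦃X Y : B⦄, (X ⟶ Y) → Prop)
    {Bb A₁ A₂ E : B} (f₁ : A₁ ⟶ Bb) (f₂ : A₂ ⟶ Bb) (p : E ⟶ A₁) (q : E ⟶ A₂)
    (T T' : AlmostTriple W f₁ f₂ p q) : Prop :=
  ∃ (A₄ : B) (u : A₄ ⟶ T.obj) (u' : A₄ ⟶ T'.obj) (σ : u' ≫ T'.t ≅ u ≫ T.t),
    W u ∧
    σ.hom ▷ (p ≫ f₁) ≫ (α_ u T.t (p ≫ f₁)).hom ≫ u ◁ (α_ T.t p f₁).inv ≫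
        u ◁ T.φ ≫ u ◁ (α_ T.t q f₂).hom ≫ (α_ u T.t (q ≫ f₂)).inv ≫ σ.inv ▷ (q ≫ f₂)
      = (α_ u' T'.t (p ≫ f₁)).hom ≫ u' ◁ (α_ T'.t p f₁).inv ≫ u' ◁ T'.φ ≫
        u' ◁ (α_ T'.t q f₂).hom ≫ (α_ u' T'.t (q ≫ f₂)).inv
/-- The quintuple associated to an almost canonical triple. -/
def tripleToSq (W : ∀ ⦃X Y : B⦄, (X ⟶ Y) → Prop)
    {A Bb A₁ A₂ E : B}
    (w₁ : A₁ ⟶ A) (f₁ : A₁ ⟶ Bb) (w₂ : A₂ ⟶ A) (f₂ : A₂ ⟶ Bb)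
    (p : E ⟶ A₁) (q : E ⟶ A₂) (ς : p ≫ w₁ ≅ q ≫ w₂)
    (T : AlmostTriple W f₁ f₂ p q) : PronkSq w₁ f₁ w₂ f₂ :=
  ⟨T.obj, T.t ≫ p, T.t ≫ q, (α_ T.t p w₁).hom ≫ T.t ◁ ς.hom ≫ (α_ T.t q w₂).inv, T.φ⟩

/-- The valid quintuples, i.e. the actual representatives of 2-morphisms of the bicategory
of fractions. -/
def ValidSq (W : ∀ ⦃X Y : B⦄, (X ⟶ Y) → Prop) {A Bb A₁ A₂ : B}
    (w₁ : A₁ ⟶ A) (f₁ : A₁ ⟶ Bb) (w₂ : A₂ ⟶ A) (f₂ : A₂ ⟶ Bb) : Type _ :=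
  {Q : PronkSq w₁ f₁ w₂ f₂ // W (Q.v₁ ≫ w₁) ∧ IsIso Q.α}

/-!
A triple `(t, φ)` gives the quintuple `(t ≫ p, t ≫ q, t ◁ ς, φ)`. If two such quintuples are
related by `σ₁ : z' ≫ t' ≫ p ≅ z ≫ t ≫ p` and `σ₂`, lifting `σ₁` through `p ∈ W` (BF4) and
refining (BF3) gives `σ : u' ≫ t' ≅ u ≫ t` with `u ∈ W` and `σ ▷ p = σ₁`. The `α`-equation then
says that `σ₂` and `σ⁻¹ ▷ q` agree after whiskering with `w₂ ∈ W`, hence after a further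
refinement (BF4c), and the `β`-equation becomes the relation `∼`. Conversely, every valid
quintuple `(v₁, v₂, α, β)` can be refined so that `v₁` and `v₂` factor as `t ≫ p` and `t ≫ q`
with `α` corresponding to `t ◁ ς`: first lift `p` along `v₁` (BF3), then lift the resulting
2-cell through `w₂` (BF4). So `N` is surjective, and it is injective by the first part.
-/

theorem Quot.map_bijective_of_iff {α β : Type*} {r : α → α → Prop} {s : β → β → Prop}
    (hs : Equivalence s) (f : α → β) (hf : ∀ a a', r a a' ↔ s (f a) (f a'))
    (hsurj : ∀ b, ∃ a, s (f a) b) :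
    Function.Bijective (Quot.map f fun a a' => (hf a a').1 : Quot r → Quot s) := by
  refine ⟨fun x y hxy => ?_, fun y => ?_⟩
  · induction x using Quot.ind with | _ a => ?_
    induction y using Quot.ind with | _ a' => ?_
    exact Quot.sound ((hf a a').2 (hs.eqvGen_iff.1 (Quot.eq.1 hxy)))
  · induction y using Quot.ind with | _ b => ?_
    obtain ⟨a, hab⟩ := hsurj b
    exact ⟨Quot.mk r a, Quot.sound hab⟩

namespace PronkBF

variable {B : Type u} [Bicategory.{w, v} B] {W : ∀ ⦃X Y : B⦄, (X ⟶ Y) → Prop}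
  (hBF : PronkBF W)
include hBF

theorem of_iso {X Y : B} {f g : X ⟶ Y} (hg : W g) (e : f ≅ g) : W f :=
  hBF.bf5 f g hg ⟨e⟩

theorem exists_iso_lift {X Y Z : B} {wm : Y ⟶ X} {f₁ f₂ : Z ⟶ Y} (hw : W wm)
    (μ : f₁ ≫ wm ≅ f₂ ≫ wm) :
    ∃ (D : B) (b : D ⟶ Z) (ν : b ≫ f₁ ≅ b ≫ f₂), W b ∧
      ν.hom ▷ wm = (α_ b f₁ wm).hom ≫ b ◁ μ.hom ≫ (α_ b f₂ wm).inv := by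
  obtain ⟨D, b, ν, hb, _, h⟩ := hBF.bf4b wm f₁ f₂ μ.hom hw inferInstance
  exact ⟨D, b, asIso ν, hb, by simp [h]⟩

theorem exists_comp_mem {X Y Z : B} {f : X ⟶ Y} {wm : Y ⟶ Z} (hw : W wm) (hfw : W (f ≫ wm)) :
    ∃ (R : B) (r : R ⟶ X), W (r ≫ f) := by
  obtain ⟨D, w', h, hw', ⟨e⟩⟩ := hBF.bf3 (f ≫ wm) wm hfw
  obtain ⟨D', b, ν, hb, -⟩ := hBF.exists_iso_lift hw (e ≪≫ (α_ h f wm).symm)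
  exact ⟨D', b ≫ h, hBF.of_iso (hBF.bf2 _ _ hb hw') (α_ b h f ≪≫ ν.symm)⟩

theorem exists_whiskerLeft_eq {X Y Z : B} {wm : Y ⟶ Z} (hw : W wm) {h₁ h₂ : X ⟶ Y}
    (γ δ : h₁ ⟶ h₂) [IsIso δ] (hγδ : γ ▷ wm = δ ▷ wm) :
    ∃ (V : B) (vm : V ⟶ X), W vm ∧ vm ◁ γ = vm ◁ δ := by
  set θ := γ ≫ inv δ
  have hθ : θ ▷ wm = 𝟙 _ := by simp [θ, hγδ]
  obtain ⟨V, um, um', ζ, hum, hζ⟩ := hBF.bf4c wm h₁ h₁ (𝟙 _) (𝟙 X) (𝟙 X ◁ θ) (𝟙 X) (𝟙 _)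
    hw (hBF.bf1 X) (hBF.bf1 X) (by simp [hθ]) (by simp)
  have hθ' : um ◁ θ = 𝟙 _ := by
    rw [← cancel_epi ((ρ_ um).hom ▷ h₁), ← cancel_mono ((ρ_ um).inv ▷ h₁ ≫ ζ.hom ▷ h₁)]
    simpa using hζ.symm
  refine ⟨V, um, hBF.of_iso hum (ρ_ um).symm, ?_⟩
  simpa [θ] using hθ' =≫ um ◁ δ

theorem exists_iso_comp {X Y Z P : B} {wm : Y ⟶ X} (hw : W wm) {y : Z ⟶ Y}
    (hyw : W (y ≫ wm)) (z : P ⟶ Y) :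
    ∃ (D : B) (k : D ⟶ P) (k' : D ⟶ Z), W k ∧ Nonempty (k ≫ z ≅ k' ≫ y) := by
  obtain ⟨D, d, d', hd, ⟨ζ⟩⟩ := hBF.bf3 (y ≫ wm) (z ≫ wm) hyw
  obtain ⟨D', e, ι, he, -⟩ := hBF.exists_iso_lift hw (α_ d z wm ≪≫ ζ ≪≫ (α_ d' y wm).symm)
  exact ⟨D', e ≫ d, e ≫ d', hBF.bf2 _ _ he hd, ⟨α_ e d z ≪≫ ι ≪≫ (α_ e d' y).symm⟩⟩

end PronkBF

section Pasting

variable {B : Type u} [Bicategory.{w, v} B] {A₁ A₂ X : B} {g₁ : A₁ ⟶ X} {g₂ : A₂ ⟶ X}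

/-- Both equations in `PronkRel` have this shape: `γ` and `γ'` agree after pasting with the
invertible 2-cells `σ₁` and `σ₂` (with `(g₁, g₂, γ)` equal to `(w₁, w₂, α)` or `(f₁, f₂, β)`). -/
def PastingEq {P P' A₄ : B} {v₁ : P ⟶ A₁} {v₂ : P ⟶ A₂} {v₁' : P' ⟶ A₁} {v₂' : P' ⟶ A₂}
    (z : A₄ ⟶ P) (z' : A₄ ⟶ P') (σ₁ : z' ≫ v₁' ≅ z ≫ v₁) (σ₂ : z ≫ v₂ ≅ z' ≫ v₂')
    (γ : v₁ ≫ g₁ ⟶ v₂ ≫ g₂) (γ' : v₁' ≫ g₁ ⟶ v₂' ≫ g₂) : Prop :=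
  σ₁.hom ▷ g₁ ≫ (α_ z v₁ g₁).hom ≫ z ◁ γ ≫ (α_ z v₂ g₂).inv ≫ σ₂.hom ▷ g₂ =
    (α_ z' v₁' g₁).hom ≫ z' ◁ γ' ≫ (α_ z' v₂' g₂).inv

namespace PastingEq

variable {P₁ P₂ P₃ A₄ C : B} {v₁ : P₁ ⟶ A₁} {v₂ : P₁ ⟶ A₂} {v₁' : P₂ ⟶ A₁} {v₂' : P₂ ⟶ A₂}
  {v₁'' : P₃ ⟶ A₁} {v₂'' : P₃ ⟶ A₂}
  {γ : v₁ ≫ g₁ ⟶ v₂ ≫ g₂} {γ' : v₁' ≫ g₁ ⟶ v₂' ≫ g₂} {γ'' : v₁'' ≫ g₁ ⟶ v₂'' ≫ g₂}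

theorem refl (γ : v₁ ≫ g₁ ⟶ v₂ ≫ g₂) : PastingEq (𝟙 P₁) (𝟙 P₁) (Iso.refl _) (Iso.refl _) γ γ := by
  simp [PastingEq]

theorem symm {z : A₄ ⟶ P₁} {z' : A₄ ⟶ P₂} {σ₁ : z' ≫ v₁' ≅ z ≫ v₁} {σ₂ : z ≫ v₂ ≅ z' ≫ v₂'}
    (h : PastingEq z z' σ₁ σ₂ γ γ') : PastingEq z' z σ₁.symm σ₂.symm γ' γ := by
  rw [PastingEq, ← reassoc_of% h]
  simp

theorem trans {z : A₄ ⟶ P₁} {z' : A₄ ⟶ P₂} {σ₁ : z' ≫ v₁' ≅ z ≫ v₁} {σ₂ : z ≫ v₂ ≅ z' ≫ v₂'}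
    {y : C ⟶ P₂} {y' : C ⟶ P₃} {τ₁ : y' ≫ v₁'' ≅ y ≫ v₁'} {τ₂ : y ≫ v₂' ≅ y' ≫ v₂''}
    (h : PastingEq z z' σ₁ σ₂ γ γ') (h' : PastingEq y y' τ₁ τ₂ γ' γ'')
    {D : B} {k : D ⟶ A₄} {k' : D ⟶ C} (ι : k ≫ z' ≅ k' ≫ y) :
    PastingEq (k ≫ z) (k' ≫ y')
      (Iso.refl _ ≪⊗≫ whiskerLeftIso k' τ₁ ≪⊗≫ whiskerRightIso ι.symm v₁' ≪⊗≫
        whiskerLeftIso k σ₁ ≪⊗≫ Iso.refl _)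
      (Iso.refl _ ≪⊗≫ whiskerLeftIso k σ₂ ≪⊗≫ whiskerRightIso ι v₂' ≪⊗≫
        whiskerLeftIso k' τ₂ ≪⊗≫ Iso.refl _) γ γ'' := by
  unfold PastingEq at h h' ⊢
  calc _ = 𝟙 _ ⊗≫ k' ◁ (τ₁.hom ▷ g₁) ⊗≫ ι.inv ▷ (v₁' ≫ g₁) ⊗≫
        k ◁ (σ₁.hom ▷ g₁ ≫ (α_ z v₁ g₁).hom ≫ z ◁ γ ≫ (α_ z v₂ g₂).inv ≫ σ₂.hom ▷ g₂) ⊗≫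
        ι.hom ▷ (v₂' ≫ g₂) ⊗≫ k' ◁ (τ₂.hom ▷ g₂) ⊗≫ 𝟙 _ := by
        simp only [bicategoricalIsoComp, Iso.trans_hom, Iso.symm_hom, Iso.refl_hom,
          whiskerLeftIso_hom, whiskerRightIso_hom]
        bicategory
    _ = 𝟙 _ ⊗≫ k' ◁ (τ₁.hom ▷ g₁) ⊗≫ ι.inv ▷ (v₁' ≫ g₁) ⊗≫
        ((k ≫ z') ◁ γ' ≫ ι.hom ▷ (v₂' ≫ g₂)) ⊗≫ k' ◁ (τ₂.hom ▷ g₂) ⊗≫ 𝟙 _ := by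
        rw [h]; bicategory
    _ = 𝟙 _ ⊗≫ k' ◁ (τ₁.hom ▷ g₁) ⊗≫ (ι.inv ▷ (v₁' ≫ g₁) ≫ ι.hom ▷ (v₁' ≫ g₁)) ⊗≫
        (k' ≫ y) ◁ γ' ⊗≫ k' ◁ (τ₂.hom ▷ g₂) ⊗≫ 𝟙 _ := by
        rw [whisker_exchange]; bicategory
    _ = 𝟙 _ ⊗≫ k' ◁ (τ₁.hom ▷ g₁ ≫ (α_ y v₁' g₁).hom ≫ y ◁ γ' ≫
          (α_ y v₂' g₂).inv ≫ τ₂.hom ▷ g₂) ⊗≫ 𝟙 _ := by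
        rw [inv_hom_whiskerRight]; bicategory
    _ = _ := by rw [h']; bicategory

theorem whiskerLeft {z : A₄ ⟶ P₁} {z' : A₄ ⟶ P₂} {σ₁ : z' ≫ v₁' ≅ z ≫ v₁}
    {σ₂ : z ≫ v₂ ≅ z' ≫ v₂'} (h : PastingEq z z' σ₁ σ₂ γ γ') {D : B} (k : D ⟶ A₄)
    {ρ₁ : (k ≫ z') ≫ v₁' ≅ (k ≫ z) ≫ v₁} {ρ₂ : (k ≫ z) ≫ v₂ ≅ (k ≫ z') ≫ v₂'}
    (h₁ : ρ₁.hom = (α_ k z' v₁').hom ≫ k ◁ σ₁.hom ≫ (α_ k z v₁).inv)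
    (h₂ : ρ₂.hom = (α_ k z v₂).hom ≫ k ◁ σ₂.hom ≫ (α_ k z' v₂').inv) :
    PastingEq (k ≫ z) (k ≫ z') ρ₁ ρ₂ γ γ' := by
  unfold PastingEq at h ⊢
  calc _ = 𝟙 _ ⊗≫ k ◁ (σ₁.hom ▷ g₁ ≫ (α_ z v₁ g₁).hom ≫ z ◁ γ ≫ (α_ z v₂ g₂).inv ≫
        σ₂.hom ▷ g₂) ⊗≫ 𝟙 _ := by rw [h₁, h₂]; bicategory
    _ = _ := by rw [h]; bicategory

theorem whiskerRight_hom_eq {z : A₄ ⟶ P₁} {z' : A₄ ⟶ P₂} {σ₁ : z' ≫ v₁' ≅ z ≫ v₁}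
    {σ₂ σ₂' : z ≫ v₂ ≅ z' ≫ v₂'} [IsIso γ] (h : PastingEq z z' σ₁ σ₂ γ γ')
    (h' : PastingEq z z' σ₁ σ₂' γ γ') : σ₂.hom ▷ g₂ = σ₂'.hom ▷ g₂ := by
  unfold PastingEq at h h'
  simpa only [cancel_epi] using h.trans h'.symm

end PastingEq

end Pasting

namespace PronkRel

variable {B : Type u} [Bicategory.{w, v} B] {W : ∀ ⦃X Y : B⦄, (X ⟶ Y) → Prop}
  (hBF : PronkBF W) {A Bb A₁ A₂ : B}
  {w₁ : A₁ ⟶ A} {f₁ : A₁ ⟶ Bb} {w₂ : A₂ ⟶ A} {f₂ : A₂ ⟶ Bb}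
include hBF

theorem refl {Q : PronkSq w₁ f₁ w₂ f₂} (hQ : W (Q.v₁ ≫ w₁)) : PronkRel W w₁ f₁ w₂ f₂ Q Q :=
  ⟨Q.obj, 𝟙 _, 𝟙 _, Iso.refl _, Iso.refl _, hBF.of_iso hQ (whiskerRightIso (λ_ _) w₁),
    PastingEq.refl _, PastingEq.refl _⟩

theorem symm {Q Q' : PronkSq w₁ f₁ w₂ f₂} (h : PronkRel W w₁ f₁ w₂ f₂ Q Q') :
    PronkRel W w₁ f₁ w₂ f₂ Q' Q := by
  obtain ⟨A₄, z, z', σ₁, σ₂, hW, hα, hβ⟩ := h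
  exact ⟨A₄, z', z, σ₁.symm, σ₂.symm, hBF.of_iso hW (whiskerRightIso σ₁ w₁),
    PastingEq.symm hα, PastingEq.symm hβ⟩

theorem trans {Q₁ Q₂ Q₃ : PronkSq w₁ f₁ w₂ f₂} (hQ₂ : W (Q₂.v₁ ≫ w₁))
    (h : PronkRel W w₁ f₁ w₂ f₂ Q₁ Q₂) (h' : PronkRel W w₁ f₁ w₂ f₂ Q₂ Q₃) :
    PronkRel W w₁ f₁ w₂ f₂ Q₁ Q₃ := by
  obtain ⟨A₄, z, z', σ₁, σ₂, hW, hα, hβ⟩ := h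
  obtain ⟨C, y, y', τ₁, τ₂, hW', hα', hβ'⟩ := h'
  obtain ⟨D, k, k', hk, ⟨ι⟩⟩ :=
    hBF.exists_iso_comp hQ₂ (hBF.of_iso hW' (α_ y Q₂.v₁ w₁).symm) z'
  exact ⟨D, k ≫ z, k' ≫ y', _, _, hBF.of_iso (hBF.bf2 _ _ hk hW) (bicategoricalIso _ _),
    PastingEq.trans hα hα' ι, PastingEq.trans hβ hβ' ι⟩

theorem equivalence :
    Equivalence (fun Q Q' : ValidSq W w₁ f₁ w₂ f₂ => PronkRel W w₁ f₁ w₂ f₂ Q.1 Q'.1) :=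
  ⟨fun Q => refl hBF Q.2.1, symm hBF, fun {_ Q₂ _} => trans hBF Q₂.2.1⟩

end PronkRel

section Triples

variable {B : Type u} [Bicategory.{w, v} B]

def assocWhiskerRightIso {A₄ T T' E Z : B} {u : A₄ ⟶ T} {u' : A₄ ⟶ T'} {t : T ⟶ E}
    {t' : T' ⟶ E} (σ : u' ≫ t' ≅ u ≫ t) (p : E ⟶ Z) : u' ≫ t' ≫ p ≅ u ≫ t ≫ p :=
  (α_ u' t' p).symm ≪≫ whiskerRightIso σ p ≪≫ α_ u t p

variable {A₄ T T' E A₁ A₂ X : B} {u : A₄ ⟶ T} {u' : A₄ ⟶ T'} {t : T ⟶ E} {t' : T' ⟶ E}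
  {p : E ⟶ A₁} {q : E ⟶ A₂} {g₁ : A₁ ⟶ X} {g₂ : A₂ ⟶ X}

theorem pastingEq_assocWhiskerRightIso_iff (σ : u' ≫ t' ≅ u ≫ t)
    (φ : (t ≫ p) ≫ g₁ ⟶ (t ≫ q) ≫ g₂) (φ' : (t' ≫ p) ≫ g₁ ⟶ (t' ≫ q) ≫ g₂) :
    PastingEq u u' (assocWhiskerRightIso σ p) (assocWhiskerRightIso σ.symm q) φ φ' ↔
      σ.hom ▷ (p ≫ g₁) ≫ (α_ u t (p ≫ g₁)).hom ≫ u ◁ (α_ t p g₁).inv ≫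
          u ◁ φ ≫ u ◁ (α_ t q g₂).hom ≫ (α_ u t (q ≫ g₂)).inv ≫ σ.inv ▷ (q ≫ g₂)
        = (α_ u' t' (p ≫ g₁)).hom ≫ u' ◁ (α_ t' p g₁).inv ≫ u' ◁ φ' ≫
          u' ◁ (α_ t' q g₂).hom ≫ (α_ u' t' (q ≫ g₂)).inv := by
  unfold PastingEq
  constructor <;> intro h
  · calc _ = 𝟙 _ ⊗≫ ((assocWhiskerRightIso σ p).hom ▷ g₁ ≫ (α_ u (t ≫ p) g₁).hom ≫ u ◁ φ ≫
          (α_ u (t ≫ q) g₂).inv ≫ (assocWhiskerRightIso σ.symm q).hom ▷ g₂) ⊗≫ 𝟙 _ := by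
          simp only [assocWhiskerRightIso, Iso.trans_hom, Iso.symm_hom, whiskerRightIso_hom]
          bicategory
      _ = _ := by rw [h]; bicategory
  · calc _ = 𝟙 _ ⊗≫ (σ.hom ▷ (p ≫ g₁) ≫ (α_ u t (p ≫ g₁)).hom ≫ u ◁ (α_ t p g₁).inv ≫
          u ◁ φ ≫ u ◁ (α_ t q g₂).hom ≫ (α_ u t (q ≫ g₂)).inv ≫ σ.inv ▷ (q ≫ g₂)) ⊗≫ 𝟙 _ := by
          simp only [assocWhiskerRightIso, Iso.trans_hom, Iso.symm_hom, whiskerRightIso_hom]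
          bicategory
      _ = _ := by rw [h]; bicategory

theorem pastingEq_assocWhiskerRightIso_whiskerLeft (σ : u' ≫ t' ≅ u ≫ t)
    (ς : p ≫ g₁ ⟶ q ≫ g₂) :
    PastingEq u u' (assocWhiskerRightIso σ p) (assocWhiskerRightIso σ.symm q)
      ((α_ t p g₁).hom ≫ t ◁ ς ≫ (α_ t q g₂).inv)
      ((α_ t' p g₁).hom ≫ t' ◁ ς ≫ (α_ t' q g₂).inv) := by
  rw [pastingEq_assocWhiskerRightIso_iff]
  calc _ = 𝟙 _ ⊗≫ (σ.hom ▷ (p ≫ g₁) ≫ (u ≫ t) ◁ ς) ⊗≫ σ.inv ▷ (q ≫ g₂) := by bicategory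
    _ = 𝟙 _ ⊗≫ (u' ≫ t') ◁ ς ⊗≫ (σ.hom ▷ (q ≫ g₂) ≫ σ.inv ▷ (q ≫ g₂)) := by
      rw [← whisker_exchange]; bicategory
    _ = _ := by rw [hom_inv_whiskerRight]; bicategory

end Triples

section AlmostTriples

variable {B : Type u} [Bicategory.{w, v} B] {W : ∀ ⦃X Y : B⦄, (X ⟶ Y) → Prop}
  (hBF : PronkBF W) {A Bb A₁ A₂ E : B}
  {w₁ : A₁ ⟶ A} {f₁ : A₁ ⟶ Bb} {w₂ : A₂ ⟶ A} {f₂ : A₂ ⟶ Bb}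
  {p : E ⟶ A₁} {q : E ⟶ A₂}
include hBF

theorem tripleToSq_valid (hw₁ : W w₁) (hp : W p) (ς : p ≫ w₁ ≅ q ≫ w₂)
    (T : AlmostTriple W f₁ f₂ p q) :
    W ((tripleToSq W w₁ f₁ w₂ f₂ p q ς T).v₁ ≫ w₁) ∧
      IsIso (tripleToSq W w₁ f₁ w₂ f₂ p q ς T).α :=
  ⟨hBF.of_iso (hBF.bf2 _ _ T.ht (hBF.bf2 _ _ hp hw₁)) (α_ T.t p w₁),
    inferInstanceAs (IsIso ((α_ T.t p w₁).hom ≫ T.t ◁ ς.hom ≫ (α_ T.t q w₂).inv))⟩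

theorem pronkRel_tripleToSq_of_tripleRel (hw₁ : W w₁) (hp : W p) (ς : p ≫ w₁ ≅ q ≫ w₂)
    {T T' : AlmostTriple W f₁ f₂ p q} (h : TripleRel W f₁ f₂ p q T T') :
    PronkRel W w₁ f₁ w₂ f₂ (tripleToSq W w₁ f₁ w₂ f₂ p q ς T)
      (tripleToSq W w₁ f₁ w₂ f₂ p q ς T') := by
  obtain ⟨A₄, u, u', σ, hu, hφ⟩ := h
  exact ⟨A₄, u, u', assocWhiskerRightIso σ p, assocWhiskerRightIso σ.symm q,
    hBF.of_iso (hBF.bf2 _ _ (hBF.bf2 _ _ hu T.ht) (hBF.bf2 _ _ hp hw₁))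
      (bicategoricalIso ((u ≫ T.t ≫ p) ≫ w₁) _),
    pastingEq_assocWhiskerRightIso_whiskerLeft σ ς.hom,
    (pastingEq_assocWhiskerRightIso_iff σ T.φ T'.φ).2 hφ⟩

theorem tripleRel_of_pronkRel_tripleToSq (hw₁ : W w₁) (hw₂ : W w₂) (hp : W p)
    {ς : p ≫ w₁ ≅ q ≫ w₂} {T T' : AlmostTriple W f₁ f₂ p q}
    (h : PronkRel W w₁ f₁ w₂ f₂ (tripleToSq W w₁ f₁ w₂ f₂ p q ς T)
      (tripleToSq W w₁ f₁ w₂ f₂ p q ς T')) :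
    TripleRel W f₁ f₂ p q T T' := by
  obtain ⟨A₄, z, z', σ₁, σ₂, hW, hα, hβ⟩ := h
  dsimp only [tripleToSq] at z z' σ₁ σ₂ hW hα hβ
  obtain ⟨D, v₀, ν, hv₀, hν⟩ :=
    hBF.exists_iso_lift hp (α_ z' T'.t p ≪≫ σ₁ ≪≫ (α_ z T.t p).symm)
  obtain ⟨R, r, hr⟩ := hBF.exists_comp_mem (f := v₀ ≫ z)
    (hBF.bf2 _ _ (hBF.bf2 _ _ T.ht hp) hw₁)
    (hBF.of_iso (hBF.bf2 _ _ hv₀ hW) (bicategoricalIso _ (v₀ ≫ (z ≫ T.t ≫ p) ≫ w₁)))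
  let σ : ((r ≫ v₀) ≫ z') ≫ T'.t ≅ ((r ≫ v₀) ≫ z) ≫ T.t :=
    bicategoricalIso _ _ ≪≫ whiskerLeftIso r ν ≪≫ bicategoricalIso _ _
  let σ₂' : ((r ≫ v₀) ≫ z) ≫ T.t ≫ q ≅ ((r ≫ v₀) ≫ z') ≫ T'.t ≫ q :=
    α_ (r ≫ v₀) z _ ≪≫ whiskerLeftIso (r ≫ v₀) σ₂ ≪≫ (α_ (r ≫ v₀) z' _).symm
  have hσp : (assocWhiskerRightIso σ p).hom =
      (α_ (r ≫ v₀) z' _).hom ≫ (r ≫ v₀) ◁ σ₁.hom ≫ (α_ (r ≫ v₀) z _).inv := by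
    calc _ = 𝟙 _ ⊗≫ r ◁ (ν.hom ▷ p) ⊗≫ 𝟙 _ := by
          simp only [σ, assocWhiskerRightIso, Iso.trans_hom, Iso.symm_hom, whiskerLeftIso_hom,
            whiskerRightIso_hom]
          bicategory
      _ = _ := by rw [hν]; simp only [Iso.trans_hom, Iso.symm_hom]; bicategory
  -- The `α`-equation determines the second 2-cell once the first is fixed, up to `▷ w₂`.
  have hσq : (assocWhiskerRightIso σ.symm q).hom ▷ w₂ = σ₂'.hom ▷ w₂ :=
    PastingEq.whiskerRight_hom_eq (pastingEq_assocWhiskerRightIso_whiskerLeft σ ς.hom)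
      (PastingEq.whiskerLeft hα (r ≫ v₀) hσp rfl)
  obtain ⟨V, vm, hvm, hq⟩ := hBF.exists_whiskerLeft_eq hw₂ _ _ hσq
  let σ' : (vm ≫ (r ≫ v₀) ≫ z') ≫ T'.t ≅ (vm ≫ (r ≫ v₀) ≫ z) ≫ T.t :=
    α_ vm _ _ ≪≫ whiskerLeftIso vm σ ≪≫ (α_ vm _ _).symm
  refine ⟨V, vm ≫ (r ≫ v₀) ≫ z, vm ≫ (r ≫ v₀) ≫ z', σ', hBF.bf2 _ _ hvm (hBF.of_iso hr (α_ r v₀ z)),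
    (pastingEq_assocWhiskerRightIso_iff σ' T.φ T'.φ).1 ?_⟩
  refine (PastingEq.whiskerLeft hβ (r ≫ v₀) (ρ₂ := σ₂') hσp rfl).whiskerLeft vm ?_ ?_
  · simp [σ', assocWhiskerRightIso]
  · rw [← hq]
    simp [σ', assocWhiskerRightIso]

theorem tripleRel_iff_pronkRel_tripleToSq (hw₁ : W w₁) (hw₂ : W w₂) (hp : W p)
    (ς : p ≫ w₁ ≅ q ≫ w₂) (T T' : AlmostTriple W f₁ f₂ p q) :
    TripleRel W f₁ f₂ p q T T' ↔ PronkRel W w₁ f₁ w₂ f₂ (tripleToSq W w₁ f₁ w₂ f₂ p q ς T)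
      (tripleToSq W w₁ f₁ w₂ f₂ p q ς T') :=
  ⟨pronkRel_tripleToSq_of_tripleRel hBF hw₁ hp ς, tripleRel_of_pronkRel_tripleToSq hBF hw₁ hw₂ hp⟩

theorem exists_span_factorization (hw₁ : W w₁) (hw₂ : W w₂) (hp : W p)
    (ς : p ≫ w₁ ≅ q ≫ w₂) (Q : PronkSq w₁ f₁ w₂ f₂) (hQ : W (Q.v₁ ≫ w₁)) [IsIso Q.α] :
    ∃ (R : B) (c : R ⟶ Q.obj) (t : R ⟶ E) (κ : c ≫ Q.v₁ ≅ t ≫ p) (ν : t ≫ q ≅ c ≫ Q.v₂),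
      W t ∧ κ.hom ▷ w₁ ≫ (α_ t p w₁).hom ≫ t ◁ ς.hom ≫ (α_ t q w₂).inv ≫ ν.hom ▷ w₂ =
        (α_ c Q.v₁ w₁).hom ≫ c ◁ Q.α ≫ (α_ c Q.v₂ w₂).inv := by
  obtain ⟨D, a, e, ha, ⟨κ⟩⟩ := hBF.bf3 p Q.v₁ hp
  let μ : (e ≫ q) ≫ w₂ ≅ (a ≫ Q.v₂) ≫ w₂ := Iso.refl _ ≪⊗≫ whiskerLeftIso e ς.symm ≪⊗≫
    whiskerRightIso κ.symm w₁ ≪⊗≫ whiskerLeftIso a (asIso Q.α) ≪⊗≫ Iso.refl _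
  obtain ⟨D', b, ν, hb, hν⟩ := hBF.exists_iso_lift hw₂ μ
  have hepw : W (e ≫ p ≫ w₁) := hBF.of_iso (hBF.bf2 _ _ ha hQ)
    ((α_ e p w₁).symm ≪≫ whiskerRightIso κ.symm w₁ ≪≫ α_ a Q.v₁ w₁)
  obtain ⟨R, r, hr⟩ := hBF.exists_comp_mem (f := b ≫ e) (hBF.bf2 _ _ hp hw₁)
    (hBF.of_iso (hBF.bf2 _ _ hb hepw) (α_ b e (p ≫ w₁)))
  refine ⟨R, r ≫ b ≫ a, r ≫ b ≫ e, Iso.refl _ ≪⊗≫ whiskerLeftIso (r ≫ b) κ ≪⊗≫ Iso.refl _,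
    Iso.refl _ ≪⊗≫ whiskerLeftIso r ν ≪⊗≫ Iso.refl _, hr, ?_⟩
  calc _ = 𝟙 _ ⊗≫ (r ≫ b) ◁ κ.hom ▷ w₁ ⊗≫ (r ≫ b ≫ e) ◁ ς.hom ⊗≫ r ◁ (ν.hom ▷ w₂) ⊗≫ 𝟙 _ := by
        simp only [bicategoricalIsoComp, Iso.trans_hom, Iso.refl_hom, whiskerLeftIso_hom]
        bicategory
    _ = 𝟙 _ ⊗≫ (r ≫ b) ◁ (κ.hom ▷ w₁ ≫ (α_ e p w₁).hom ≫ e ◁ (ς.hom ≫ ς.inv) ≫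
          (α_ e p w₁).inv ≫ κ.inv ▷ w₁) ⊗≫ (r ≫ b ≫ a) ◁ Q.α ⊗≫ 𝟙 _ := by
        rw [hν]
        simp only [μ, bicategoricalIsoComp, Iso.trans_hom, Iso.refl_hom, whiskerLeftIso_hom,
          whiskerRightIso_hom, Iso.symm_hom, asIso_hom]
        bicategory
    _ = _ := by
        simp only [Iso.hom_inv_id, whiskerLeft_id, Category.id_comp, Iso.hom_inv_id_assoc,
          hom_inv_whiskerRight]
        bicategory

theorem pronkRel_tripleToSq_mk (hw₁ : W w₁) (hp : W p) (ς : p ≫ w₁ ≅ q ≫ w₂)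
    (Q : PronkSq w₁ f₁ w₂ f₂) {R : B} {c : R ⟶ Q.obj} {t : R ⟶ E} (ht : W t)
    (κ : c ≫ Q.v₁ ≅ t ≫ p) (ν : t ≫ q ≅ c ≫ Q.v₂)
    (hκν : κ.hom ▷ w₁ ≫ (α_ t p w₁).hom ≫ t ◁ ς.hom ≫ (α_ t q w₂).inv ≫ ν.hom ▷ w₂ =
      (α_ c Q.v₁ w₁).hom ≫ c ◁ Q.α ≫ (α_ c Q.v₂ w₂).inv) :
    PronkRel W w₁ f₁ w₂ f₂ (tripleToSq W w₁ f₁ w₂ f₂ p q ς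
      ⟨R, t, ht, κ.inv ▷ f₁ ≫ (α_ c Q.v₁ f₁).hom ≫ c ◁ Q.β ≫ (α_ c Q.v₂ f₂).inv ≫
        ν.inv ▷ f₂⟩) Q := by
  refine ⟨R, 𝟙 R, c, κ ≪≫ (λ_ _).symm, λ_ _ ≪≫ ν,
    hBF.of_iso (hBF.bf2 _ _ ht (hBF.bf2 _ _ hp hw₁)) (bicategoricalIso ((𝟙 R ≫ t ≫ p) ≫ w₁) _),
    ?_, ?_⟩
  · dsimp only [tripleToSq]
    rw [← hκν]
    simp only [Iso.trans_hom, Iso.symm_hom]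
    bicategory
  · dsimp only [tripleToSq]
    simp

theorem exists_pronkRel_tripleToSq (hw₁ : W w₁) (hw₂ : W w₂) (hp : W p)
    (ς : p ≫ w₁ ≅ q ≫ w₂) (Q : ValidSq W w₁ f₁ w₂ f₂) :
    ∃ T : AlmostTriple W f₁ f₂ p q,
      PronkRel W w₁ f₁ w₂ f₂ (tripleToSq W w₁ f₁ w₂ f₂ p q ς T) Q.1 := by
  have := Q.2.2
  obtain ⟨R, c, t, κ, ν, ht, hκν⟩ := exists_span_factorization hBF hw₁ hw₂ hp ς Q.1 Q.2.1
  exact ⟨_, pronkRel_tripleToSq_mk hBF hw₁ hp ς Q.1 ht κ ν hκν⟩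

end AlmostTriples
theorem statement12_general {B : Type u} [Bicategory.{w, v} B]
    (W : ∀ ⦃X Y : B⦄, (X ⟶ Y) → Prop) (hBF : PronkBF W)
    {A Bb A₁ A₂ E : B}
    (w₁ : A₁ ⟶ A) (f₁ : A₁ ⟶ Bb) (w₂ : A₂ ⟶ A) (f₂ : A₂ ⟶ Bb)
    (hw₁ : W w₁) (hw₂ : W w₂)
    (p : E ⟶ A₁) (q : E ⟶ A₂) (hp : W p) (ς : p ≫ w₁ ≅ q ≫ w₂) :
    (∀ T T' : AlmostTriple W f₁ f₂ p q,
        TripleRel W f₁ f₂ p q T T' ↔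
          PronkRel W w₁ f₁ w₂ f₂ (tripleToSq W w₁ f₁ w₂ f₂ p q ς T)
            (tripleToSq W w₁ f₁ w₂ f₂ p q ς T')) ∧
    ∃ N : Quot (TripleRel W f₁ f₂ p q) →
        Quot (fun Q Q' : ValidSq W w₁ f₁ w₂ f₂ => PronkRel W w₁ f₁ w₂ f₂ Q.1 Q'.1),
      (∀ (T : AlmostTriple W f₁ f₂ p q)
          (h : W ((tripleToSq W w₁ f₁ w₂ f₂ p q ς T).v₁ ≫ w₁) ∧
               IsIso (tripleToSq W w₁ f₁ w₂ f₂ p q ς T).α),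
          N (Quot.mk _ T) = Quot.mk _ ⟨tripleToSq W w₁ f₁ w₂ f₂ p q ς T, h⟩) ∧
      Function.Bijective N := by
  let N (T : AlmostTriple W f₁ f₂ p q) : ValidSq W w₁ f₁ w₂ f₂ :=
    ⟨tripleToSq W w₁ f₁ w₂ f₂ p q ς T, tripleToSq_valid hBF hw₁ hp ς T⟩
  have hN := tripleRel_iff_pronkRel_tripleToSq (f₁ := f₁) (f₂ := f₂) hBF hw₁ hw₂ hp ς
  exact ⟨hN, Quot.map N fun T T' => (hN T T').1, fun _ _ => rfl,
    Quot.map_bijective_of_iff (PronkRel.equivalence hBF) N hN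
      (exists_pronkRel_tripleToSq hBF hw₁ hw₂ hp ς)⟩

/-- two almost canonical triples are `∼`-related iff the associated
quintuples are Pronk-equivalent; consequently the induced map `N` from `∼`-classes of triples
to Pronk classes of valid quintuples is a well-defined bijection. -/
theorem statement12 {B : Type u} [Bicategory.{w, v} B] [Bicategory.Strict B]
    (W : ∀ ⦃X Y : B⦄, (X ⟶ Y) → Prop) (hBF : PronkBF W)
    {A Bb A₁ A₂ E : B}
    (w₁ : A₁ ⟶ A) (f₁ : A₁ ⟶ Bb) (w₂ : A₂ ⟶ A) (f₂ : A₂ ⟶ Bb)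
    (hw₁ : W w₁) (hw₂ : W w₂)
    (p : E ⟶ A₁) (q : E ⟶ A₂) (hp : W p) (ς : p ≫ w₁ ≅ q ≫ w₂) :
    (∀ T T' : AlmostTriple W f₁ f₂ p q,
        TripleRel W f₁ f₂ p q T T' ↔
          PronkRel W w₁ f₁ w₂ f₂ (tripleToSq W w₁ f₁ w₂ f₂ p q ς T)
            (tripleToSq W w₁ f₁ w₂ f₂ p q ς T')) ∧
    ∃ N : Quot (TripleRel W f₁ f₂ p q) →
        Quot (fun Q Q' : ValidSq W w₁ f₁ w₂ f₂ => PronkRel W w₁ f₁ w₂ f₂ Q.1 Q'.1),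
      (∀ (T : AlmostTriple W f₁ f₂ p q)
          (h : W ((tripleToSq W w₁ f₁ w₂ f₂ p q ς T).v₁ ≫ w₁) ∧
               IsIso (tripleToSq W w₁ f₁ w₂ f₂ p q ς T).α),
          N (Quot.mk _ T) = Quot.mk _ ⟨tripleToSq W w₁ f₁ w₂ f₂ p q ς T, h⟩) ∧
      Function.Bijective N :=
  statement12_general W hBF w₁ f₁ w₂ f₂ hw₁ hw₂ p q hp ς
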